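/- There exist 2×2 strictly accretive matrices A, B such that s₁(A − B) > s₁(A ⊕ B), where A ⊕ B is the block diagonal matrix diag(A,B). For instance A = [[2+2i, −1+2i],[3+2i, 1+i]] and B = [[1+2i, −2−i],[−2−i, 5+i]]. -/

import Mathlib

/-!
For positive semidefinite `M` with eigenvalues `λᵢ ≥ 0`, the largest of which is `λ`,
one has `λ² ≤ ∑ λᵢ² = tr M²` and `tr M² = ∑ λᵢ² ≤ λ ∑ λᵢ = λ tr M`.
Applied to `M = TᴴT`, whose largest eigenvalue is `s₁(T)²`, this gives
`s₁(A ⊕ B)⁴ ≤ tr((AᴴA)²) + tr((BᴴB)²) = 686 + 1583 = 2269` and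
`s₁(A - B)² ≥ tr((DᴴD)²) / tr(DᴴD) = 3073 / 61` for `D = A - B`,
and `(3073 / 61)² > 2269`.
-/

open MeasureTheory Matrix
open scoped ComplexOrder

/-- The "real part" (Hermitian part) of a complex matrix: `(A + Aᴴ)/2`. -/
noncomputable def mre {m : Type*} (A : Matrix m m ℂ) : Matrix m m ℂ :=
  (1/2 : ℂ) • (A + Aᴴ)

/-- A matrix is accretive if its Hermitian part is positive semidefinite. -/
def Accretive {m : Type*} [Fintype m] (A : Matrix m m ℂ) : Prop :=
  (mre A).PosSemidef

/-- Principal fractional power `A ^ t` of a matrix whose spectrum avoids `(-∞, 0]`,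
given (for `0 < t < 1`) by the standard integral formula
`A^t = (sin (tπ)/π) ∫₀^∞ s^(t-1) A (A + s I)⁻¹ ds`. -/
noncomputable def apow {m : Type*} [Fintype m] [DecidableEq m]
    (A : Matrix m m ℂ) (t : ℝ) : Matrix m m ℂ :=
  if t = 0 then 1 else if t = 1 then A else
    Matrix.of fun i j => ∫ s in Set.Ioi (0 : ℝ),
      (((Real.sin (t * Real.pi) / Real.pi) * s ^ (t - 1)) •
        (A * (A + (s : ℂ) • (1 : Matrix m m ℂ))⁻¹)) i j

/-- The weighted geometric mean `A ♯ₜ B = A^(1/2) (A^(-1/2) B A^(-1/2))^t A^(1/2)`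
of (strictly accretive) matrices. -/
noncomputable def gmean {m : Type*} [Fintype m] [DecidableEq m]
    (A : Matrix m m ℂ) (t : ℝ) (B : Matrix m m ℂ) : Matrix m m ℂ :=
  apow A (1/2) * apow ((apow A (1/2))⁻¹ * B * (apow A (1/2))⁻¹) t * apow A (1/2)

/-- The absolute value `|X| = (Xᴴ X)^(1/2)` of a matrix. -/
noncomputable def absM {m : Type*} [Fintype m] [DecidableEq m]
    (X : Matrix m m ℂ) : Matrix m m ℂ :=
  (Matrix.posSemidef_conjTranspose_mul_self X).1.eigenvectorUnitary.1 *
    Matrix.diagonal ((↑) ∘ (√·) ∘ (Matrix.posSemidef_conjTranspose_mul_self X).1.eigenvalues) *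
    (star (Matrix.posSemidef_conjTranspose_mul_self X).1.eigenvectorUnitary : Matrix m m ℂ)

/-- The `j`-th largest singular value of a complex matrix. -/
noncomputable def singVals {k : ℕ} (T : Matrix (Fin k) (Fin k) ℂ) (j : Fin k) : ℝ :=
  Real.sqrt (((Matrix.posSemidef_conjTranspose_mul_self T).1.eigenvalues ∘
    Tuple.sort (Matrix.posSemidef_conjTranspose_mul_self T).1.eigenvalues) j.rev)

/-- The `j`-th largest eigenvalue of a Hermitian matrix (junk value `0` otherwise). -/
noncomputable def eigDesc {k : ℕ} (T : Matrix (Fin k) (Fin k) ℂ) (j : Fin k) : ℝ :=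
  if h : T.IsHermitian then (h.eigenvalues ∘ Tuple.sort h.eigenvalues) j.rev else 0

/-- The numerical range of `A` lies in the sector
`S_α = {z : Re z ≥ 0, |Im z| ≤ tan α · Re z}`. -/
def InSector {k : ℕ} (α : ℝ) (A : Matrix (Fin k) (Fin k) ℂ) : Prop :=
  ∀ x : EuclideanSpace ℂ (Fin k), ‖x‖ = 1 →
    0 ≤ (star (x : Fin k → ℂ) ⬝ᵥ A.mulVec (x : Fin k → ℂ)).re ∧
      |(star (x : Fin k → ℂ) ⬝ᵥ A.mulVec (x : Fin k → ℂ)).im| ≤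
        Real.tan α * (star (x : Fin k → ℂ) ⬝ᵥ A.mulVec (x : Fin k → ℂ)).re

namespace Matrix

section Spectrum

variable {n 𝕜 : Type*} [Fintype n] [DecidableEq n] [RCLike 𝕜] {A : Matrix n n 𝕜}

theorem IsHermitian.trace_mul_self_eq_sum_eigenvalues_sq (hA : A.IsHermitian) :
    (A * A).trace = ∑ i, ((hA.eigenvalues i ^ 2 : ℝ) : 𝕜) := by
  conv_lhs => rw [hA.spectral_theorem, ← map_mul, Unitary.conjStarAlgAut_apply, trace_mul_cycle,
    Unitary.coe_star_mul_self, one_mul, diagonal_mul_diagonal, trace_diagonal]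
  simp [sq]

theorem IsHermitian.re_trace_mul_self (hA : A.IsHermitian) :
    RCLike.re (A * A).trace = ∑ i, hA.eigenvalues i ^ 2 := by
  simp [hA.trace_mul_self_eq_sum_eigenvalues_sq]

theorem IsHermitian.re_trace (hA : A.IsHermitian) :
    RCLike.re A.trace = ∑ i, hA.eigenvalues i := by
  simp [hA.trace_eq_sum_eigenvalues]

theorem IsHermitian.eigenvalues_sq_le_re_trace_mul_self (hA : A.IsHermitian) (j : n) :
    hA.eigenvalues j ^ 2 ≤ RCLike.re (A * A).trace := by
  rw [hA.re_trace_mul_self]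
  exact Finset.single_le_sum (fun i _ => sq_nonneg (hA.eigenvalues i)) (Finset.mem_univ j)

theorem PosSemidef.re_trace_mul_self_le (hA : A.PosSemidef) {j : n}
    (hj : ∀ i, hA.1.eigenvalues i ≤ hA.1.eigenvalues j) :
    RCLike.re (A * A).trace ≤ hA.1.eigenvalues j * RCLike.re A.trace := by
  rw [hA.1.re_trace_mul_self, hA.1.re_trace, Finset.mul_sum]
  gcongr with i
  rw [sq]
  exact mul_le_mul_of_nonneg_right (hj i) (hA.eigenvalues_nonneg i)

theorem PosDef.conjTranspose_mul_self_of_det_ne_zero {C : Matrix n n 𝕜} (hC : C.det ≠ 0) :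
    (Cᴴ * C).PosDef :=
  .conjTranspose_mul_self C <|
    mulVec_injective_iff_isUnit.2 ((isUnit_iff_isUnit_det C).2 hC.isUnit)

end Spectrum

section Blocks

variable {l m p α : Type*} [Fintype l] [Fintype m] [Fintype p] [Semiring α]
  (e : l ⊕ m ≃ p) (A : Matrix l l α) (B : Matrix m m α)

theorem conjTranspose_mul_self_reindex_fromBlocks [StarRing α] :
    (reindex e e (fromBlocks A 0 0 B))ᴴ * reindex e e (fromBlocks A 0 0 B) =
      reindex e e (fromBlocks (Aᴴ * A) 0 0 (Bᴴ * B)) := by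
  simp [fromBlocks_conjTranspose, fromBlocks_multiply]

theorem trace_mul_self_reindex_fromBlocks :
    (reindex e e (fromBlocks A 0 0 B) * reindex e e (fromBlocks A 0 0 B)).trace =
      (A * A).trace + (B * B).trace := by
  rw [reindex_apply, submatrix_mul_equiv, fromBlocks_multiply]
  simp only [trace, diag_apply, submatrix_apply]
  rw [e.symm.sum_comp (fun i => fromBlocks _ _ _ _ i i), Fintype.sum_sum_type]
  simp

end Blocks

end Matrix

theorem Tuple.le_sort_top {n : ℕ} [NeZero n] (f : Fin n → ℝ) (i : Fin n) :
    f i ≤ f (Tuple.sort f ⊤) := by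
  obtain ⟨j, rfl⟩ := (Tuple.sort f).surjective i
  exact Tuple.monotone_sort f le_top

theorem singVals_nonneg {k : ℕ} (T : Matrix (Fin k) (Fin k) ℂ) (j : Fin k) :
    0 ≤ singVals T j :=
  Real.sqrt_nonneg _

section SingularValues

variable {k : ℕ} [NeZero k] (T : Matrix (Fin k) (Fin k) ℂ)

theorem singVals_zero_sq :
    singVals T 0 ^ 2 = (posSemidef_conjTranspose_mul_self T).1.eigenvalues
      (Tuple.sort (posSemidef_conjTranspose_mul_self T).1.eigenvalues ⊤) := by
  rw [singVals, Fin.rev_zero_eq_top, Function.comp_apply,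
    Real.sq_sqrt ((posSemidef_conjTranspose_mul_self T).eigenvalues_nonneg _)]

theorem singVals_zero_pow_four_le : singVals T 0 ^ 4 ≤ ((Tᴴ * T) * (Tᴴ * T)).trace.re := by
  rw [show 4 = 2 * 2 by rfl, pow_mul, singVals_zero_sq]
  exact (posSemidef_conjTranspose_mul_self T).1.eigenvalues_sq_le_re_trace_mul_self _

theorem re_trace_le_singVals_zero_sq_mul :
    ((Tᴴ * T) * (Tᴴ * T)).trace.re ≤ singVals T 0 ^ 2 * (Tᴴ * T).trace.re := by
  rw [singVals_zero_sq]
  exact (posSemidef_conjTranspose_mul_self T).re_trace_mul_self_le (Tuple.le_sort_top _)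

end SingularValues

def counterexampleA : Matrix (Fin 2) (Fin 2) ℂ :=
  !![2 + 2*Complex.I, -1 + 2*Complex.I; 3 + 2*Complex.I, 1 + Complex.I]

def counterexampleB : Matrix (Fin 2) (Fin 2) ℂ :=
  !![1 + 2*Complex.I, -2 - Complex.I; -2 - Complex.I, 5 + Complex.I]

-- Cholesky factorisations of the Hermitian parts `!![2, 1; 1, 1]` and `!![1, -2; -2, 5]`.
theorem mre_counterexampleA :
    mre counterexampleA = !![1, 0; 1, 1]ᴴ * !![1, 0; 1, 1] := by
  ext i j
  fin_cases i <;> fin_cases j <;>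
    simp [counterexampleA, mre, mul_apply, Fin.sum_univ_two] <;> ring_nf

theorem mre_counterexampleB :
    mre counterexampleB = !![1, -2; 0, 1]ᴴ * !![1, -2; 0, 1] := by
  ext i j
  fin_cases i <;> fin_cases j <;>
    simp [counterexampleB, mre, mul_apply, Fin.sum_univ_two, map_ofNat] <;> ring_nf

theorem singVals_fromBlocks_counterexample_pow_four_le :
    singVals (reindex finSumFinEquiv finSumFinEquiv
      (fromBlocks counterexampleA 0 0 counterexampleB)) (0 : Fin (2 + 2)) ^ 4 ≤ 2269 := by
  have hA : ((counterexampleAᴴ * counterexampleA) *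
      (counterexampleAᴴ * counterexampleA)).trace = 686 := by
    simp [counterexampleA, trace, mul_apply, Fin.sum_univ_two, conjTranspose_apply]
    norm_num [Complex.ext_iff]
  have hB : ((counterexampleBᴴ * counterexampleB) *
      (counterexampleBᴴ * counterexampleB)).trace = 1583 := by
    simp [counterexampleB, trace, mul_apply, Fin.sum_univ_two, conjTranspose_apply]
    norm_num [Complex.ext_iff]
  refine (singVals_zero_pow_four_le _).trans_eq ?_
  rw [conjTranspose_mul_self_reindex_fromBlocks, trace_mul_self_reindex_fromBlocks, hA, hB]
  norm_num

theorem le_singVals_counterexample_sub_sq :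
    3073 / 61 ≤ singVals (counterexampleA - counterexampleB) 0 ^ 2 := by
  set D := counterexampleA - counterexampleB
  have hD : D = !![1, 1 + 3*Complex.I; 5 + 3*Complex.I, -4] := by
    ext i j
    fin_cases i <;> fin_cases j <;> simp [D, counterexampleA, counterexampleB] <;> ring_nf
  have h1 : (Dᴴ * D).trace = 61 := by
    simp [hD, trace, mul_apply, Fin.sum_univ_two, conjTranspose_apply]
    norm_num [Complex.ext_iff]
  have h2 : ((Dᴴ * D) * (Dᴴ * D)).trace = 3073 := by
    simp [hD, trace, mul_apply, Fin.sum_univ_two, conjTranspose_apply]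
    norm_num [Complex.ext_iff]
  have hbound := re_trace_le_singVals_zero_sq_mul D
  rw [h1, h2] at hbound
  norm_num at hbound
  linarith

/-- the explicit 2×2 strictly accretive matrices `A`, `B` of the paper
satisfy `s₁(A ⊕ B) < s₁(A - B)`. -/
theorem stmt7 :
    ∃ A B : Matrix (Fin 2) (Fin 2) ℂ,
      A = !![2 + 2*Complex.I, -1 + 2*Complex.I; 3 + 2*Complex.I, 1 + Complex.I] ∧
      B = !![1 + 2*Complex.I, -2 - Complex.I; -2 - Complex.I, 5 + Complex.I] ∧
      (mre A).PosDef ∧ (mre B).PosDef ∧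
      singVals (Matrix.reindex finSumFinEquiv finSumFinEquiv
          (Matrix.fromBlocks A 0 0 B)) (0 : Fin (2 + 2)) <
        singVals (A - B) (0 : Fin 2) := by
  refine ⟨counterexampleA, counterexampleB, rfl, rfl, ?_, ?_, ?_⟩
  · rw [mre_counterexampleA]
    exact .conjTranspose_mul_self_of_det_ne_zero (by simp [det_fin_two])
  · rw [mre_counterexampleB]
    exact .conjTranspose_mul_self_of_det_ne_zero (by simp [det_fin_two])
  · have hsum := singVals_fromBlocks_counterexample_pow_four_le
    have hdiff := le_singVals_counterexample_sub_sq
    by_contra! h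
    have h4 := pow_le_pow_left₀ (singVals_nonneg _ _) h 4
    nlinarith [pow_le_pow_left₀ (by norm_num) hdiff 2]
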